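/- arXiv:2503.01413 — 3 statements merged into one kernel-verified Lean document; each statement's English description precedes it below -/
import Mathlib

section
/- Let A, B : ℝ → ℝ be fuzzy numbers. Then for every α ∈ (0,1], the α-cut of the sup-min sum A ⊕ B satisfies {z ∈ ℝ : (A ⊕ B)(z) ≥ α} = [A_α⁻ + B_α⁻, A_α⁺ + B_α⁺]; moreover A ⊕ B is normal, i.e., (A ⊕ B)(z₀) = 1 for some z₀ ∈ ℝ. -/
/-- A fuzzy number: values in [0,1], normal, and each α-cut (α ∈ (0,1]) is a
nonempty compact interval. -/
def IsFuzzyNumber (A : ℝ → ℝ) : Prop :=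
  (∀ x : ℝ, A x ∈ Set.Icc (0 : ℝ) 1) ∧
  (∃ x₀ : ℝ, A x₀ = 1) ∧
  (∀ α ∈ Set.Ioc (0 : ℝ) 1, ∃ a b : ℝ, a ≤ b ∧ {x : ℝ | α ≤ A x} = Set.Icc a b)

/-- The sup-min (extension principle) sum of two fuzzy sets. -/
noncomputable def supMinSum (A B : ℝ → ℝ) (z : ℝ) : ℝ :=
  sSup {m : ℝ | ∃ x y : ℝ, x + y = z ∧ m = min (A x) (B y)}

namespace FuzzyAux

lemma cut_struct {A : ℝ → ℝ} (hA : IsFuzzyNumber A) {α : ℝ}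
    (hα : α ∈ Set.Ioc (0:ℝ) 1) :
    {x : ℝ | α ≤ A x} = Set.Icc (sInf {x : ℝ | α ≤ A x}) (sSup {x : ℝ | α ≤ A x}) ∧
    sInf {x : ℝ | α ≤ A x} ≤ sSup {x : ℝ | α ≤ A x} := by
  obtain ⟨a, b, hab, hset⟩ := hA.2.2 α hα
  rw [hset, csInf_Icc hab, csSup_Icc hab]
  exact ⟨rfl, hab⟩

lemma x0_mem {A : ℝ → ℝ} (hA : IsFuzzyNumber A) {α : ℝ} (hα1 : α ≤ 1) :
    ∃ x₀, x₀ ∈ {x : ℝ | α ≤ A x} ∧ A x₀ = 1 := by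
  obtain ⟨x₀, hx₀⟩ := hA.2.1
  exact ⟨x₀, by simpa [Set.mem_setOf_eq, hx₀] using hα1, hx₀⟩

/-- ε-approximation of the infimum of the α-cut by infima of β-cuts, β < α. -/
lemma inf_approx {A : ℝ → ℝ} (hA : IsFuzzyNumber A) {α ε : ℝ}
    (hα : α ∈ Set.Ioc (0:ℝ) 1) (hε : 0 < ε) :
    ∃ β, 0 < β ∧ β < α ∧ sInf {x : ℝ | α ≤ A x} - ε < sInf {x : ℝ | β ≤ A x} := by
  by_contra h
  push_neg at h
  set p := sInf {x : ℝ | α ≤ A x} - ε with hp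
  obtain ⟨x₀, hx₀mem, hx₀⟩ := x0_mem hA hα.2
  have hx₀low : sInf {x : ℝ | α ≤ A x} ≤ x₀ := by
    have := (cut_struct hA hα).1
    have := hx₀mem; rw [cut_struct hA hα |>.1] at this
    exact this.1
  -- p belongs to every β-cut for 0 < β < α
  have hpmem : ∀ β, 0 < β → β < α → β ≤ A p := by
    intro β hβ0 hβα
    have hβ : β ∈ Set.Ioc (0:ℝ) 1 := ⟨hβ0, le_of_lt (lt_of_lt_of_le hβα hα.2)⟩
    have hcut := cut_struct hA hβ
    have hlow : sInf {x : ℝ | β ≤ A x} ≤ p := h β hβ0 hβα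
    have hx₀memβ : x₀ ∈ {x : ℝ | β ≤ A x} := by
      simp [Set.mem_setOf_eq, hx₀]; exact le_of_lt (lt_of_lt_of_le hβα hα.2)
    have hx₀high : x₀ ≤ sSup {x : ℝ | β ≤ A x} := by
      rw [hcut.1] at hx₀memβ; exact hx₀memβ.2
    have hpcut : p ∈ {x : ℝ | β ≤ A x} := by
      rw [hcut.1]
      exact ⟨hlow, by linarith⟩
    exact hpcut
  have hAp : α ≤ A p := by
    by_contra hlt
    push_neg at hlt
    have hAp0 : 0 ≤ A p := (hA.1 p).1
    have := hpmem ((A p + α) / 2) (by linarith) (by linarith)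
    linarith
  have hpm : p ∈ {x : ℝ | α ≤ A x} := hAp
  rw [(cut_struct hA hα).1] at hpm
  linarith [hpm.1]

/-- ε-approximation of the supremum of the α-cut by suprema of β-cuts, β < α. -/
lemma sup_approx {A : ℝ → ℝ} (hA : IsFuzzyNumber A) {α ε : ℝ}
    (hα : α ∈ Set.Ioc (0:ℝ) 1) (hε : 0 < ε) :
    ∃ β, 0 < β ∧ β < α ∧ sSup {x : ℝ | β ≤ A x} < sSup {x : ℝ | α ≤ A x} + ε := by
  by_contra h
  push_neg at h
  set p := sSup {x : ℝ | α ≤ A x} + ε with hp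
  obtain ⟨x₀, hx₀mem, hx₀⟩ := x0_mem hA hα.2
  have hx₀high : x₀ ≤ sSup {x : ℝ | α ≤ A x} := by
    have := hx₀mem; rw [(cut_struct hA hα).1] at this
    exact this.2
  have hpmem : ∀ β, 0 < β → β < α → β ≤ A p := by
    intro β hβ0 hβα
    have hβ : β ∈ Set.Ioc (0:ℝ) 1 := ⟨hβ0, le_of_lt (lt_of_lt_of_le hβα hα.2)⟩
    have hcut := cut_struct hA hβ
    have hhigh : p ≤ sSup {x : ℝ | β ≤ A x} := h β hβ0 hβα
    have hx₀memβ : x₀ ∈ {x : ℝ | β ≤ A x} := by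
      simp [Set.mem_setOf_eq, hx₀]; exact le_of_lt (lt_of_lt_of_le hβα hα.2)
    have hx₀low : sInf {x : ℝ | β ≤ A x} ≤ x₀ := by
      rw [hcut.1] at hx₀memβ; exact hx₀memβ.1
    have hpcut : p ∈ {x : ℝ | β ≤ A x} := by
      rw [hcut.1]
      exact ⟨by linarith, hhigh⟩
    exact hpcut
  have hAp : α ≤ A p := by
    by_contra hlt
    push_neg at hlt
    have hAp0 : 0 ≤ A p := (hA.1 p).1
    have := hpmem ((A p + α) / 2) (by linarith) (by linarith)
    linarith
  have hpm : p ∈ {x : ℝ | α ≤ A x} := hAp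
  rw [(cut_struct hA hα).1] at hpm
  linarith [hpm.2]

end FuzzyAux

open FuzzyAux in
theorem alpha_cut_of_supMinSum (A B : ℝ → ℝ)
    (hA : IsFuzzyNumber A) (hB : IsFuzzyNumber B) :
    (∀ α ∈ Set.Ioc (0 : ℝ) 1,
      {z : ℝ | α ≤ supMinSum A B z} =
        Set.Icc (sInf {x : ℝ | α ≤ A x} + sInf {y : ℝ | α ≤ B y})
                (sSup {x : ℝ | α ≤ A x} + sSup {y : ℝ | α ≤ B y})) ∧
    (∃ z₀ : ℝ, supMinSum A B z₀ = 1) := by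
  -- basic facts about the sets Mz
  have hMne : ∀ z : ℝ, ({m : ℝ | ∃ x y : ℝ, x + y = z ∧ m = min (A x) (B y)}).Nonempty :=
    fun z => ⟨min (A 0) (B z), 0, z, by ring, rfl⟩
  have hMbdd : ∀ z : ℝ, BddAbove {m : ℝ | ∃ x y : ℝ, x + y = z ∧ m = min (A x) (B y)} := by
    intro z
    refine ⟨1, ?_⟩
    rintro m ⟨x, y, -, rfl⟩
    exact le_trans (min_le_left _ _) (hA.1 x).2
  constructor
  · intro α hα
    set aA := sInf {x : ℝ | α ≤ A x} with haA
    set bA := sSup {x : ℝ | α ≤ A x} with hbA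
    set aB := sInf {y : ℝ | α ≤ B y} with haB
    set bB := sSup {y : ℝ | α ≤ B y} with hbB
    have hcA := cut_struct hA hα
    have hcB := cut_struct hB hα
    ext z
    simp only [Set.mem_setOf_eq, Set.mem_Icc, supMinSum]
    constructor
    · intro hz
      -- for every β ∈ (0, α), z lies between the β-cut endpoint sums
      have key : ∀ β, 0 < β → β < α →
          sInf {x : ℝ | β ≤ A x} + sInf {y : ℝ | β ≤ B y} ≤ z ∧
          z ≤ sSup {x : ℝ | β ≤ A x} + sSup {y : ℝ | β ≤ B y} := by
        intro β hβ0 hβα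
        have hβ : β ∈ Set.Ioc (0:ℝ) 1 := ⟨hβ0, le_of_lt (lt_of_lt_of_le hβα hα.2)⟩
        obtain ⟨m, hm, hβm⟩ := exists_lt_of_lt_csSup (hMne z) (lt_of_lt_of_le hβα hz)
        obtain ⟨x, y, hxy, rfl⟩ := hm
        have hAx : β ≤ A x := le_of_lt (lt_of_lt_of_le hβm (min_le_left _ _))
        have hBy : β ≤ B y := le_of_lt (lt_of_lt_of_le hβm (min_le_right _ _))
        have hx : x ∈ Set.Icc (sInf {x : ℝ | β ≤ A x}) (sSup {x : ℝ | β ≤ A x}) := by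
          rw [← (cut_struct hA hβ).1]; exact hAx
        have hy : y ∈ Set.Icc (sInf {y : ℝ | β ≤ B y}) (sSup {y : ℝ | β ≤ B y}) := by
          rw [← (cut_struct hB hβ).1]; exact hBy
        constructor
        · calc sInf {x : ℝ | β ≤ A x} + sInf {y : ℝ | β ≤ B y} ≤ x + y :=
                add_le_add hx.1 hy.1
            _ = z := hxy
        · calc z = x + y := hxy.symm
            _ ≤ sSup {x : ℝ | β ≤ A x} + sSup {y : ℝ | β ≤ B y} :=
                add_le_add hx.2 hy.2
      constructor
      · by_contra hlt
        push_neg at hlt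
        set ε := aA + aB - z with hε
        have hε0 : 0 < ε := by linarith
        obtain ⟨β₁, hβ₁0, hβ₁α, hβ₁⟩ := inf_approx hA hα (by positivity : (0:ℝ) < ε / 2)
        obtain ⟨β₂, hβ₂0, hβ₂α, hβ₂⟩ := inf_approx hB hα (by positivity : (0:ℝ) < ε / 2)
        set β := max β₁ β₂ with hβdef
        have hβ0 : 0 < β := lt_max_of_lt_left hβ₁0
        have hβα : β < α := max_lt hβ₁α hβ₂α
        have hβIoc : β ∈ Set.Ioc (0:ℝ) 1 := ⟨hβ0, le_of_lt (lt_of_lt_of_le hβα hα.2)⟩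
        have hβ₁Ioc : β₁ ∈ Set.Ioc (0:ℝ) 1 := ⟨hβ₁0, le_of_lt (lt_of_lt_of_le hβ₁α hα.2)⟩
        have hβ₂Ioc : β₂ ∈ Set.Ioc (0:ℝ) 1 := ⟨hβ₂0, le_of_lt (lt_of_lt_of_le hβ₂α hα.2)⟩
        -- monotonicity of sInf of cuts
        have hmono1 : sInf {x : ℝ | β₁ ≤ A x} ≤ sInf {x : ℝ | β ≤ A x} := by
          refine csInf_le_csInf ?_ ?_ ?_
          · rw [(cut_struct hA hβ₁Ioc).1]; exact bddBelow_Icc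
          · obtain ⟨x₀, h, _⟩ := x0_mem hA hβIoc.2; exact ⟨x₀, h⟩
          · intro x hx
            simp only [Set.mem_setOf_eq] at hx ⊢
            exact le_trans (le_max_left _ _) hx
        have hmono2 : sInf {y : ℝ | β₂ ≤ B y} ≤ sInf {y : ℝ | β ≤ B y} := by
          refine csInf_le_csInf ?_ ?_ ?_
          · rw [(cut_struct hB hβ₂Ioc).1]; exact bddBelow_Icc
          · obtain ⟨y₀, h, _⟩ := x0_mem hB hβIoc.2; exact ⟨y₀, h⟩
          · intro y hy
            simp only [Set.mem_setOf_eq] at hy ⊢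
            exact le_trans (le_max_right _ _) hy
        have := (key β hβ0 hβα).1
        linarith
      · by_contra hlt
        push_neg at hlt
        set ε := z - (bA + bB) with hε
        have hε0 : 0 < ε := by linarith
        obtain ⟨β₁, hβ₁0, hβ₁α, hβ₁⟩ := sup_approx hA hα (by positivity : (0:ℝ) < ε / 2)
        obtain ⟨β₂, hβ₂0, hβ₂α, hβ₂⟩ := sup_approx hB hα (by positivity : (0:ℝ) < ε / 2)
        set β := max β₁ β₂ with hβdef
        have hβ0 : 0 < β := lt_max_of_lt_left hβ₁0
        have hβα : β < α := max_lt hβ₁α hβ₂α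
        have hβIoc : β ∈ Set.Ioc (0:ℝ) 1 := ⟨hβ0, le_of_lt (lt_of_lt_of_le hβα hα.2)⟩
        have hβ₁Ioc : β₁ ∈ Set.Ioc (0:ℝ) 1 := ⟨hβ₁0, le_of_lt (lt_of_lt_of_le hβ₁α hα.2)⟩
        have hβ₂Ioc : β₂ ∈ Set.Ioc (0:ℝ) 1 := ⟨hβ₂0, le_of_lt (lt_of_lt_of_le hβ₂α hα.2)⟩
        have hmono1 : sSup {x : ℝ | β ≤ A x} ≤ sSup {x : ℝ | β₁ ≤ A x} := by
          refine csSup_le_csSup ?_ ?_ ?_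
          · rw [(cut_struct hA hβ₁Ioc).1]; exact bddAbove_Icc
          · obtain ⟨x₀, h, _⟩ := x0_mem hA hβIoc.2; exact ⟨x₀, h⟩
          · intro x hx
            simp only [Set.mem_setOf_eq] at hx ⊢
            exact le_trans (le_max_left _ _) hx
        have hmono2 : sSup {y : ℝ | β ≤ B y} ≤ sSup {y : ℝ | β₂ ≤ B y} := by
          refine csSup_le_csSup ?_ ?_ ?_
          · rw [(cut_struct hB hβ₂Ioc).1]; exact bddAbove_Icc
          · obtain ⟨y₀, h, _⟩ := x0_mem hB hβIoc.2; exact ⟨y₀, h⟩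
          · intro y hy
            simp only [Set.mem_setOf_eq] at hy ⊢
            exact le_trans (le_max_right _ _) hy
        have := (key β hβ0 hβα).2
        linarith
    · rintro ⟨hz1, hz2⟩
      -- choose a witness pair
      set x := max aA (z - bB) with hx
      set y := z - x with hy
      have hxA : x ∈ Set.Icc aA bA := ⟨le_max_left _ _, max_le hcA.2 (by linarith)⟩
      have hyB : y ∈ Set.Icc aB bB := by
        constructor
        · have : x ≤ z - aB := max_le (by linarith) (by linarith [hcB.2])
          simpa [hy] using by linarith
        · have : z - bB ≤ x := le_max_right _ _
          simpa [hy] using by linarith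
      have hAx : α ≤ A x := by
        have hm : x ∈ {x : ℝ | α ≤ A x} := by rw [hcA.1]; exact hxA
        exact hm
      have hBy : α ≤ B y := by
        have hm : y ∈ {y : ℝ | α ≤ B y} := by rw [hcB.1]; exact hyB
        exact hm
      have hmem : min (A x) (B y) ∈ {m : ℝ | ∃ x y : ℝ, x + y = z ∧ m = min (A x) (B y)} :=
        ⟨x, y, by simp [hy], rfl⟩
      exact le_trans (le_min hAx hBy) (le_csSup (hMbdd z) hmem)
  · obtain ⟨x₀, hx₀⟩ := hA.2.1
    obtain ⟨y₀, hy₀⟩ := hB.2.1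
    refine ⟨x₀ + y₀, le_antisymm ?_ ?_⟩
    · apply csSup_le (hMne _)
      rintro m ⟨x, y, -, rfl⟩
      exact le_trans (min_le_left _ _) (hA.1 x).2
    · have hmem : (1:ℝ) ∈ {m : ℝ | ∃ x y : ℝ, x + y = x₀ + y₀ ∧ m = min (A x) (B y)} :=
        ⟨x₀, y₀, rfl, by rw [hx₀, hy₀, min_self]⟩
      exact le_csSup (hMbdd _) hmem
end

section
/- Let A, B : ℝ → ℝ be fuzzy numbers. Then for every α ∈ (0,1], the α-cut of the sup-min product A ⊙ B satisfies {z ∈ ℝ : (A ⊙ B)(z) ≥ α} = [min{A_α⁻B_α⁻, A_α⁺B_α⁻, A_α⁻B_α⁺, A_α⁺B_α⁺}, max{A_α⁻B_α⁻, A_α⁺B_α⁻, A_α⁻B_α⁺, A_α⁺B_α⁺}]; moreover A ⊙ B is normal, i.e., (A ⊙ B)(z₀) = 1 for some z₀ ∈ ℝ. -/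
/-- The sup-min (extension principle) product of two fuzzy sets. -/
noncomputable def supMinProd (A B : ℝ → ℝ) (z : ℝ) : ℝ :=
  sSup {m : ℝ | ∃ x y : ℝ, x * y = z ∧ m = min (A x) (B y)}

lemma aux_lim_le {α t : ℝ} (hα : 0 < α) (h : ∀ n : ℕ, α - α / ((n : ℝ) + 2) ≤ t) :
    α ≤ t := by
  by_contra ht
  push_neg at ht
  obtain ⟨n, hn⟩ := exists_nat_gt (α / (α - t))
  have h2 : (0 : ℝ) < (n : ℝ) + 2 := by positivity
  have h3 := h n
  rw [div_lt_iff₀ (sub_pos.mpr ht)] at hn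
  have h5 : (α - t) * ((n : ℝ) + 2) ≤ α := (le_div_iff₀ h2).mp (by linarith)
  nlinarith [sub_pos.mpr ht]

lemma supMinProd_set_nonempty (A B : ℝ → ℝ) (z : ℝ) :
    {m : ℝ | ∃ x y : ℝ, x * y = z ∧ m = min (A x) (B y)}.Nonempty :=
  ⟨min (A z) (B 1), z, 1, mul_one z, rfl⟩

lemma supMinProd_set_bddAbove (A B : ℝ → ℝ) (hA : IsFuzzyNumber A) (z : ℝ) :
    BddAbove {m : ℝ | ∃ x y : ℝ, x * y = z ∧ m = min (A x) (B y)} := by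
  refine ⟨1, ?_⟩
  rintro m ⟨x, y, -, rfl⟩
  exact le_trans (min_le_left _ _) (hA.1 x).2

lemma key_iff (A B : ℝ → ℝ) (hA : IsFuzzyNumber A) (hB : IsFuzzyNumber B)
    {α : ℝ} (hα : α ∈ Set.Ioc (0 : ℝ) 1) (z : ℝ) :
    α ≤ supMinProd A B z ↔ ∃ x y : ℝ, x * y = z ∧ α ≤ A x ∧ α ≤ B y := by
  obtain ⟨hα0, hα1⟩ := hα
  constructor
  · intro h
    set β : ℕ → ℝ := fun n => α - α / ((n : ℝ) + 2) with hβ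
    have hβlt : ∀ n, β n < α := by
      intro n
      have : 0 < α / ((n : ℝ) + 2) := by positivity
      simp only [hβ]; linarith
    have hβpos : ∀ n, 0 < β n := by
      intro n
      have h2 : (0 : ℝ) < (n : ℝ) + 2 := by positivity
      have hn0 : (0:ℝ) ≤ (n:ℝ) := Nat.cast_nonneg n
      have : α / ((n : ℝ) + 2) < α := div_lt_self hα0 (by linarith)
      simp only [hβ]; linarith
    have hβ1 : ∀ n, β n ≤ 1 := fun n => le_of_lt (lt_of_lt_of_le (hβlt n) hα1)
    have hβmono : ∀ n, β n ≤ β (n + 1) := by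
      intro n
      have h2 : (0 : ℝ) < (n : ℝ) + 2 := by positivity
      have : α / ((n : ℝ) + 1 + 2) ≤ α / ((n : ℝ) + 2) := by
        apply div_le_div_of_nonneg_left hα0.le h2
        push_cast; linarith
      simp only [hβ]; push_cast; linarith
    choose a b hab hcutA using fun n => (hA.2.2 (β n) ⟨hβpos n, hβ1 n⟩)
    choose c d hcd hcutB using fun n => (hB.2.2 (β n) ⟨hβpos n, hβ1 n⟩)
    set Z : ℕ → Set (ℝ × ℝ) :=
      fun n => {p : ℝ × ℝ | p.1 * p.2 = z ∧ β n ≤ A p.1 ∧ β n ≤ B p.2} with hZ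
    have hZeq : ∀ n, Z n =
        ((Set.Icc (a n) (b n)) ×ˢ (Set.Icc (c n) (d n))) ∩ {p : ℝ × ℝ | p.1 * p.2 = z} := by
      intro n
      ext p
      have h1 : p.1 ∈ {x : ℝ | β n ≤ A x} ↔ p.1 ∈ Set.Icc (a n) (b n) := by rw [hcutA n]
      have h2 : p.2 ∈ {y : ℝ | β n ≤ B y} ↔ p.2 ∈ Set.Icc (c n) (d n) := by rw [hcutB n]
      simp only [hZ, Set.mem_setOf_eq, Set.mem_inter_iff, Set.mem_prod] at *
      tauto
    have hclosed : ∀ n, IsClosed (Z n) := by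
      intro n
      rw [hZeq n]
      exact ((isClosed_Icc.prod isClosed_Icc)).inter
        (isClosed_eq (continuous_fst.mul continuous_snd) continuous_const)
    have hcomp0 : IsCompact (Z 0) := by
      rw [hZeq 0]
      exact (isCompact_Icc.prod isCompact_Icc).inter_right
        (isClosed_eq (continuous_fst.mul continuous_snd) continuous_const)
    have hsub : ∀ n, Z (n + 1) ⊆ Z n := by
      rintro n p ⟨h1, h2, h3⟩
      exact ⟨h1, le_trans (hβmono n) h2, le_trans (hβmono n) h3⟩
    have hne : ∀ n, (Z n).Nonempty := by
      intro n
      obtain ⟨m, hm, hlt⟩ := exists_lt_of_lt_csSup (supMinProd_set_nonempty A B z)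
        (lt_of_lt_of_le (hβlt n) h)
      obtain ⟨x, y, hxy, rfl⟩ := hm
      exact ⟨(x, y), hxy, (lt_min_iff.mp hlt).1.le, (lt_min_iff.mp hlt).2.le⟩
    obtain ⟨p, hp⟩ :=
      IsCompact.nonempty_iInter_of_sequence_nonempty_isCompact_isClosed Z hsub hne hcomp0 hclosed
    rw [Set.mem_iInter] at hp
    refine ⟨p.1, p.2, (hp 0).1, ?_, ?_⟩
    · exact aux_lim_le hα0 (fun n => (hp n).2.1)
    · exact aux_lim_le hα0 (fun n => (hp n).2.2)
  · rintro ⟨x, y, hxy, hx, hy⟩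
    exact le_trans (le_min hx hy)
      (le_csSup (supMinProd_set_bddAbove A B hA z) ⟨x, y, hxy, rfl⟩)

lemma image2_mul_Icc {a b c d : ℝ} (hab : a ≤ b) (hcd : c ≤ d) :
    Set.image2 (· * ·) (Set.Icc a b) (Set.Icc c d) =
      Set.Icc (min (min (a * c) (b * c)) (min (a * d) (b * d)))
              (max (max (a * c) (b * c)) (max (a * d) (b * d))) := by
  apply Set.Subset.antisymm
  · rintro z ⟨x, hx, y, hy, rfl⟩
    show x * y ∈ Set.Icc _ _
    constructor
    · rcases le_total 0 y with hy0 | hy0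
      · rcases le_total 0 a with ha0 | ha0
        · exact le_trans (le_trans (min_le_left _ _) (min_le_left _ _))
            (by linarith [mul_le_mul_of_nonneg_left hy.1 ha0,
              mul_le_mul_of_nonneg_right hx.1 hy0])
        · exact le_trans (le_trans (min_le_right _ _) (min_le_left _ _))
            (by linarith [mul_le_mul_of_nonpos_left hy.2 ha0,
              mul_le_mul_of_nonneg_right hx.1 hy0])
      · rcases le_total 0 b with hb0 | hb0
        · exact le_trans (le_trans (min_le_left _ _) (min_le_right _ _))
            (by linarith [mul_le_mul_of_nonneg_left hy.1 hb0,
              mul_le_mul_of_nonpos_right hx.2 hy0])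
        · exact le_trans (le_trans (min_le_right _ _) (min_le_right _ _))
            (by linarith [mul_le_mul_of_nonpos_left hy.2 hb0,
              mul_le_mul_of_nonpos_right hx.2 hy0])
    · rcases le_total 0 y with hy0 | hy0
      · rcases le_total 0 b with hb0 | hb0
        · exact le_trans (show x * y ≤ b * d by
              linarith [mul_le_mul_of_nonneg_right hx.2 hy0,
                mul_le_mul_of_nonneg_left hy.2 hb0])
            (le_trans (le_max_right _ _) (le_max_right _ _))
        · exact le_trans (show x * y ≤ b * c by
              linarith [mul_le_mul_of_nonneg_right hx.2 hy0,
                mul_le_mul_of_nonpos_left hy.1 hb0])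
            (le_trans (le_max_right _ _) (le_max_left _ _))
      · rcases le_total 0 a with ha0 | ha0
        · exact le_trans (show x * y ≤ a * d by
              linarith [mul_le_mul_of_nonpos_right hx.1 hy0,
                mul_le_mul_of_nonneg_left hy.2 ha0])
            (le_trans (le_max_left _ _) (le_max_right _ _))
        · exact le_trans (show x * y ≤ a * c by
              linarith [mul_le_mul_of_nonpos_right hx.1 hy0,
                mul_le_mul_of_nonpos_left hy.1 ha0])
            (le_trans (le_max_left _ _) (le_max_left _ _))
  · have hconn : IsPreconnected (Set.image2 (· * ·) (Set.Icc a b) (Set.Icc c d)) := by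
      rw [← Set.image_prod]
      exact (isPreconnected_Icc.prod isPreconnected_Icc).image _
        ((continuous_fst.mul continuous_snd).continuousOn)
    have hac : a * c ∈ Set.image2 (· * ·) (Set.Icc a b) (Set.Icc c d) :=
      Set.mem_image2_of_mem (Set.left_mem_Icc.2 hab) (Set.left_mem_Icc.2 hcd)
    have hbc : b * c ∈ Set.image2 (· * ·) (Set.Icc a b) (Set.Icc c d) :=
      Set.mem_image2_of_mem (Set.right_mem_Icc.2 hab) (Set.left_mem_Icc.2 hcd)
    have had : a * d ∈ Set.image2 (· * ·) (Set.Icc a b) (Set.Icc c d) :=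
      Set.mem_image2_of_mem (Set.left_mem_Icc.2 hab) (Set.right_mem_Icc.2 hcd)
    have hbd : b * d ∈ Set.image2 (· * ·) (Set.Icc a b) (Set.Icc c d) :=
      Set.mem_image2_of_mem (Set.right_mem_Icc.2 hab) (Set.right_mem_Icc.2 hcd)
    have hminmem : min (min (a * c) (b * c)) (min (a * d) (b * d)) ∈
        Set.image2 (· * ·) (Set.Icc a b) (Set.Icc c d) := by
      rcases min_choice (min (a * c) (b * c)) (min (a * d) (b * d)) with h | h <;> rw [h] <;>
        [rcases min_choice (a * c) (b * c) with h' | h';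
         rcases min_choice (a * d) (b * d) with h' | h'] <;> rw [h'] <;> assumption
    have hmaxmem : max (max (a * c) (b * c)) (max (a * d) (b * d)) ∈
        Set.image2 (· * ·) (Set.Icc a b) (Set.Icc c d) := by
      rcases max_choice (max (a * c) (b * c)) (max (a * d) (b * d)) with h | h <;> rw [h] <;>
        [rcases max_choice (a * c) (b * c) with h' | h';
         rcases max_choice (a * d) (b * d) with h' | h'] <;> rw [h'] <;> assumption
    exact hconn.Icc_subset hminmem hmaxmem

theorem alpha_cut_of_supMinProd (A B : ℝ → ℝ)
    (hA : IsFuzzyNumber A) (hB : IsFuzzyNumber B) :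
    (∀ α ∈ Set.Ioc (0 : ℝ) 1,
      {z : ℝ | α ≤ supMinProd A B z} =
        Set.Icc
          (min (min (sInf {x : ℝ | α ≤ A x} * sInf {y : ℝ | α ≤ B y})
                    (sSup {x : ℝ | α ≤ A x} * sInf {y : ℝ | α ≤ B y}))
               (min (sInf {x : ℝ | α ≤ A x} * sSup {y : ℝ | α ≤ B y})
                    (sSup {x : ℝ | α ≤ A x} * sSup {y : ℝ | α ≤ B y})))
          (max (max (sInf {x : ℝ | α ≤ A x} * sInf {y : ℝ | α ≤ B y})
                    (sSup {x : ℝ | α ≤ A x} * sInf {y : ℝ | α ≤ B y}))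
               (max (sInf {x : ℝ | α ≤ A x} * sSup {y : ℝ | α ≤ B y})
                    (sSup {x : ℝ | α ≤ A x} * sSup {y : ℝ | α ≤ B y})))) ∧
    (∃ z₀ : ℝ, supMinProd A B z₀ = 1) := by
  constructor
  · intro α hα
    obtain ⟨a, b, hab, hcutA⟩ := hA.2.2 α hα
    obtain ⟨c, d, hcd, hcutB⟩ := hB.2.2 α hα
    rw [hcutA, hcutB, csInf_Icc hab, csSup_Icc hab, csInf_Icc hcd, csSup_Icc hcd,
      ← image2_mul_Icc hab hcd]
    ext z
    rw [Set.mem_setOf_eq, key_iff A B hA hB hα z]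
    constructor
    · rintro ⟨x, y, hxy, hx, hy⟩
      exact ⟨x, (Set.ext_iff.mp hcutA x).mp hx, y, (Set.ext_iff.mp hcutB y).mp hy, hxy⟩
    · rintro ⟨x, hx, y, hy, rfl⟩
      exact ⟨x, y, rfl, (Set.ext_iff.mp hcutA x).mpr hx, (Set.ext_iff.mp hcutB y).mpr hy⟩
  · obtain ⟨x₀, hx₀⟩ := hA.2.1
    obtain ⟨y₀, hy₀⟩ := hB.2.1
    refine ⟨x₀ * y₀, le_antisymm ?_ ?_⟩
    · apply csSup_le (supMinProd_set_nonempty A B _)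
      rintro m ⟨x, y, -, rfl⟩
      exact le_trans (min_le_left _ _) (hA.1 x).2
    · exact le_csSup (supMinProd_set_bddAbove A B hA _)
        ⟨x₀, y₀, rfl, by rw [hx₀, hy₀, min_self]⟩
end

section
/- Let X be a finite nonempty type and let ρ : X → X → ℝ satisfy ρ(x, y) > 0 for all x, y ∈ X and the multiplicative property ρ(x, z) = ρ(x, y) · ρ(y, z) for all x, y, z ∈ X. Fix w ∈ X and define μ : X → ℝ by μ(x) = ρ(x, w) / max_{y ∈ X} ρ(y, w). Then: (i) 0 < μ(x) ≤ 1 for all x ∈ X and μ(x₀) = 1 for some x₀ ∈ X; (ii) μ(x) / μ(y) = ρ(x, y) for all x, y ∈ X; (iii) for all x, y, z ∈ X, μ(x) ≥ μ(y) if and only if ρ(x, z) ≥ ρ(y, z). -/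
/-!
Multiplicativity gives `ρ x w = ρ x y * ρ y w`, so `ρ x y = ρ x w / ρ y w`: every ratio is read off the
column `ρ · w`, and the order of any column `ρ · z` is that of `ρ · w`, since the two differ by the
positive factor `ρ z w`. Dividing the column `ρ · w` by its maximum keeps both facts and normalises
the largest value to `1`.
-/

theorem Finset.sup'_pos_of_forall_pos {α ι : Type*} [LinearOrder α] [Zero α] {s : Finset ι}
    (hs : s.Nonempty) {f : ι → α} (hf : ∀ i ∈ s, 0 < f i) : 0 < s.sup' hs f :=
  let ⟨i, hi⟩ := hs
  (Finset.lt_sup'_iff hs).2 ⟨i, hi, hf i hi⟩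

section Normalization

variable {K ι : Type*} [Field K] [LinearOrder K] [IsStrictOrderedRing K]
  {s : Finset ι} (hs : s.Nonempty) {f : ι → K}

theorem Finset.div_sup'_pos (hf : ∀ i ∈ s, 0 < f i) {i : ι} (hi : i ∈ s) :
    0 < f i / s.sup' hs f :=
  div_pos (hf i hi) (Finset.sup'_pos_of_forall_pos hs hf)

theorem Finset.div_sup'_le_one (hf : ∀ i ∈ s, 0 < f i) {i : ι} (hi : i ∈ s) :
    f i / s.sup' hs f ≤ 1 :=
  div_le_one_of_le₀ (s.le_sup' f hi) (Finset.sup'_pos_of_forall_pos hs hf).le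

end Normalization

theorem Finset.exists_div_sup'_eq_one {K ι : Type*} [GroupWithZero K] [LinearOrder K]
    {s : Finset ι} (hs : s.Nonempty) {f : ι → K} (hf : ∀ i ∈ s, 0 < f i) :
    ∃ i ∈ s, f i / s.sup' hs f = 1 := by
  obtain ⟨i, hi, hsup⟩ := s.exists_mem_eq_sup' hs f
  refine ⟨i, hi, ?_⟩
  rw [← hsup]
  exact div_self (Finset.sup'_pos_of_forall_pos hs hf).ne'

section MultiplicativeRatio

variable {K X : Type*} {ρ : X → X → K}

theorem div_eq_of_mul_ratio [GroupWithZero K] (hmul : ∀ x y z : X, ρ x z = ρ x y * ρ y z) {y w : X}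
    (hyw : ρ y w ≠ 0) (x : X) : ρ x w / ρ y w = ρ x y := by
  rw [hmul x y w, mul_div_cancel_right₀ _ hyw]

theorem ratio_le_ratio_iff_of_mul [Field K] [LinearOrder K] [IsStrictOrderedRing K]
    (hmul : ∀ x y z : X, ρ x z = ρ x y * ρ y z) {z w : X} (hzw : 0 < ρ z w) (x y : X) :
    ρ y w ≤ ρ x w ↔ ρ y z ≤ ρ x z := by
  rw [hmul y z w, hmul x z w]
  exact mul_le_mul_iff_of_pos_right hzw

end MultiplicativeRatio

theorem membership_from_subjective_ratios
    (X : Type*) [Fintype X] [Nonempty X]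
    (ρ : X → X → ℝ)
    (hpos : ∀ x y : X, 0 < ρ x y)
    (hmul : ∀ x y z : X, ρ x z = ρ x y * ρ y z)
    (w : X)
    (μ : X → ℝ)
    (hμ : ∀ x : X, μ x =
      ρ x w / (Finset.univ.sup' Finset.univ_nonempty (fun y : X => ρ y w))) :
    ((∀ x : X, 0 < μ x ∧ μ x ≤ 1) ∧ ∃ x₀ : X, μ x₀ = 1) ∧
    (∀ x y : X, μ x / μ y = ρ x y) ∧
    (∀ x y z : X, μ x ≥ μ y ↔ ρ x z ≥ ρ y z) := by
  set M := Finset.univ.sup' Finset.univ_nonempty (fun y : X => ρ y w)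
  obtain rfl : μ = fun x => ρ x w / M := funext hμ
  have hcol : ∀ x ∈ Finset.univ, 0 < ρ x w := fun x _ => hpos x w
  have hM : 0 < M := Finset.sup'_pos_of_forall_pos _ hcol
  refine ⟨⟨fun x => ⟨?_, ?_⟩, ?_⟩, fun x y => ?_, fun x y z => ?_⟩
  · exact Finset.div_sup'_pos _ hcol (Finset.mem_univ x)
  · exact Finset.div_sup'_le_one _ hcol (Finset.mem_univ x)
  · obtain ⟨x₀, -, hx₀⟩ := Finset.exists_div_sup'_eq_one _ hcol
    exact ⟨x₀, hx₀⟩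
  · rw [div_div_div_cancel_right₀ hM.ne']
    exact div_eq_of_mul_ratio hmul (hpos y w).ne' x
  · rw [ge_iff_le, ge_iff_le, div_le_div_iff_of_pos_right hM]
    exact ratio_le_ratio_iff_of_mul hmul (hpos z w) x y
end
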